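/- arXiv:2501.12047 — 3 statements merged into one kernel-verified Lean document; each statement's English description precedes it below -/
import Mathlib

section
/- Let Q = (I, H, Ω) be a finite quiver whose orientation Ω contains no oriented cycles, and let i ∈ I. Then there exists a sequence of vertices (i₁, …, i_m) such that for each s, the vertex i_s is a source in the orientation μ_{i_{s−1}} ⋯ μ_{i_1}(Ω), and i is a source in μ_{i_m} ⋯ μ_{i_1}(Ω), where μ_j denotes the mutation reversing all arrows incident to j. -/
/-- Mutation of an orientation `Ω` at a vertex `j`: all arrows of `Ω` incident to `j`
are replaced by their reversals (`bar`), the other arrows are kept. -/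
def mutate {I H : Type} [DecidableEq I] [DecidableEq H]
    (src tgt : H → I) (bar : H → H) (j : I) (Ω : Finset H) : Finset H :=
  (Ω.filter fun h => src h ≠ j ∧ tgt h ≠ j)
    ∪ ((Ω.filter fun h => src h = j ∨ tgt h = j).image bar)

/-- `j` is a source for the orientation `Ω`: no arrow of `Ω` ends at `j`. -/
def IsSource {I H : Type} (tgt : H → I) (Ω : Finset H) (j : I) : Prop :=
  ∀ h ∈ Ω, tgt h ≠ j

/-- `Ω` contains an oriented cycle. -/
def HasCycle {I H : Type} (src tgt : H → I) (Ω : Finset H) : Prop :=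
  ∃ (n : ℕ) (f : Fin (n + 1) → H), (∀ k, f k ∈ Ω) ∧
    (∀ k : Fin n, tgt (f k.castSucc) = src (f k.succ)) ∧
    tgt (f (Fin.last n)) = src (f 0)

/-- A sequence of vertices is good for `Ω` if each vertex in turn is a source of the
current orientation, which is then mutated at that vertex. -/
def GoodSeq {I H : Type} [DecidableEq I] [DecidableEq H]
    (src tgt : H → I) (bar : H → H) : Finset H → List I → Prop
  | _, [] => True
  | Ω, j :: l => IsSource tgt Ω j ∧ GoodSeq src tgt bar (mutate src tgt bar j Ω) l

/-!
Induct on the number of ancestors of `i`, the vertices with a path to `i`. Acyclicity makes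
the path order on vertices well founded, so if `i` is not yet a source, a minimal ancestor `j`
of `i` exists and is a source. Mutating at the source `j` makes it a sink and keeps every
arrow away from `j`; hence the mutated orientation is still acyclic, and the ancestors of `i`
in it are ancestors in `Ω` other than `j`.
-/

open Relation

section Mutation

variable {I H : Type} (src tgt : H → I)

def HasArrow (Ω : Finset H) (a b : I) : Prop :=
  ∃ h ∈ Ω, src h = a ∧ tgt h = b

def ancestors (Ω : Finset H) (i : I) : Set I :=
  {v | TransGen (HasArrow src tgt Ω) v i}

theorem exists_path_of_transGen {Ω : Finset H} {a b : I}
    (hab : TransGen (HasArrow src tgt Ω) a b) :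
    ∃ (n : ℕ) (f : Fin (n + 1) → H), (∀ k, f k ∈ Ω) ∧
      (∀ k : Fin n, tgt (f k.castSucc) = src (f k.succ)) ∧
      src (f 0) = a ∧ tgt (f (Fin.last n)) = b := by
  induction hab with
  | single hr =>
    obtain ⟨e, he, rfl, rfl⟩ := hr
    exact ⟨0, fun _ => e, fun _ => he, Fin.elim0, rfl, rfl⟩
  | tail _ hr ih =>
    obtain ⟨n, f, hmem, hchain, rfl, hlast⟩ := ih
    obtain ⟨e, he, hsrc, rfl⟩ := hr
    refine ⟨n + 1, Fin.snoc f e, Fin.lastCases (by simpa) (by simpa), ?_, ?_, by simp⟩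
    · refine Fin.lastCases ?_ fun k => ?_
      · simpa [Fin.succ_last, hlast] using hsrc.symm
      · rw [Fin.succ_castSucc, Fin.snoc_castSucc, Fin.snoc_castSucc]
        exact hchain k
    · rw [← Fin.castSucc_zero, Fin.snoc_castSucc]

theorem not_transGen_self_of_not_hasCycle {Ω : Finset H} (hΩ : ¬ HasCycle src tgt Ω) (a : I) :
    ¬ TransGen (HasArrow src tgt Ω) a a := fun haa =>
  let ⟨n, f, hmem, hchain, h0, hlast⟩ := exists_path_of_transGen src tgt haa
  hΩ ⟨n, f, hmem, hchain, hlast.trans h0.symm⟩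

theorem exists_isSource_mem_ancestors [Finite I] {Ω : Finset H} (hΩ : ¬ HasCycle src tgt Ω)
    {i : I} (hi : ¬ IsSource tgt Ω i) : ∃ j ∈ ancestors src tgt Ω i, IsSource tgt Ω j := by
  have : IsTrans I (TransGen (HasArrow src tgt Ω)) := ⟨fun _ _ _ => TransGen.trans⟩
  have : Std.Irrefl (TransGen (HasArrow src tgt Ω)) :=
    ⟨not_transGen_self_of_not_hasCycle src tgt hΩ⟩
  have hne : (ancestors src tgt Ω i).Nonempty := by
    obtain ⟨h, hh, hti⟩ := not_forall₂.1 hi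
    exact ⟨src h, .single ⟨h, hh, rfl, not_not.1 hti⟩⟩
  obtain ⟨j, hj, hmin⟩ :=
    (Finite.wellFounded_of_trans_of_irrefl (TransGen (HasArrow src tgt Ω))).has_min _ hne
  refine ⟨j, hj, fun h hh htj => ?_⟩
  have hhj : TransGen (HasArrow src tgt Ω) (src h) j := .single ⟨h, hh, rfl, htj⟩
  exact hmin (src h) (hhj.trans hj) hhj

variable [DecidableEq I] [DecidableEq H] {bar : H → H} {Ω : Finset H} {j : I}

theorem src_ne_of_mem_mutate (hbar_src : ∀ h, src (bar h) = tgt h) (hj : IsSource tgt Ω j)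
    {h : H} (hh : h ∈ mutate src tgt bar j Ω) : src h ≠ j := by
  rcases Finset.mem_union.1 hh with hkept | hflipped
  · exact (Finset.mem_filter.1 hkept).2.1
  · obtain ⟨e, he, rfl⟩ := Finset.mem_image.1 hflipped
    exact hbar_src e ▸ hj e (Finset.mem_filter.1 he).1

theorem mem_of_mem_mutate (hbar_tgt : ∀ h, tgt (bar h) = src h) (hj : IsSource tgt Ω j)
    {h : H} (hh : h ∈ mutate src tgt bar j Ω) (htj : tgt h ≠ j) : h ∈ Ω := by
  rcases Finset.mem_union.1 hh with hkept | hflipped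
  · exact (Finset.mem_filter.1 hkept).1
  · obtain ⟨e, he, rfl⟩ := Finset.mem_image.1 hflipped
    obtain ⟨heΩ, hsj | htj'⟩ := Finset.mem_filter.1 he
    · exact absurd (hbar_tgt e ▸ hsj) htj
    · exact absurd htj' (hj e heΩ)

theorem hasArrow_of_hasArrow_mutate (hbar_tgt : ∀ h, tgt (bar h) = src h)
    (hj : IsSource tgt Ω j) {a b : I}
    (hab : HasArrow src tgt (mutate src tgt bar j Ω) a b) (hbj : b ≠ j) :
    HasArrow src tgt Ω a b :=
  let ⟨h, hh, hsa, htb⟩ := hab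
  ⟨h, mem_of_mem_mutate src tgt hbar_tgt hj hh (htb ▸ hbj), hsa, htb⟩

theorem not_hasCycle_mutate (hbar_src : ∀ h, src (bar h) = tgt h)
    (hbar_tgt : ∀ h, tgt (bar h) = src h) (hj : IsSource tgt Ω j) (hΩ : ¬ HasCycle src tgt Ω) :
    ¬ HasCycle src tgt (mutate src tgt bar j Ω) := by
  rintro ⟨n, f, hmem, hchain, hcyc⟩
  refine hΩ ⟨n, f, fun k => mem_of_mem_mutate src tgt hbar_tgt hj (hmem k) ?_, hchain, hcyc⟩
  -- on a cycle every target is also a source, and no arrow of the mutation starts at `j`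
  obtain ⟨k', hk'⟩ : ∃ k', tgt (f k) = src (f k') :=
    Fin.lastCases ⟨0, hcyc⟩ (fun m => ⟨m.succ, hchain m⟩) k
  exact hk' ▸ src_ne_of_mem_mutate src tgt hbar_src hj (hmem k')

theorem ancestors_mutate_ssubset (hbar_src : ∀ h, src (bar h) = tgt h)
    (hbar_tgt : ∀ h, tgt (bar h) = src h) (hj : IsSource tgt Ω j) {i : I}
    (hji : j ∈ ancestors src tgt Ω i) :
    ancestors src tgt (mutate src tgt bar j Ω) i ⊂ ancestors src tgt Ω i := by
  have hsrc_ne : ∀ {a b}, HasArrow src tgt (mutate src tgt bar j Ω) a b → a ≠ j :=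
    fun ⟨h, hh, hsa, _⟩ => hsa ▸ src_ne_of_mem_mutate src tgt hbar_src hj hh
  have hij : i ≠ j := by
    rintro rfl
    obtain ⟨_, _, h, hh, _, hti⟩ := TransGen.tail'_iff.1 hji
    exact hj h hh hti
  refine Set.ssubset_iff_subset_ne.2 ⟨fun v hv => ?_, fun heq => ?_⟩
  · induction hv using TransGen.head_induction_on with
    | single hab => exact .single (hasArrow_of_hasArrow_mutate src tgt hbar_tgt hj hab hij)
    | head hab hbi ih =>
      obtain ⟨c, hbc, _⟩ := TransGen.head'_iff.1 hbi
      exact .head (hasArrow_of_hasArrow_mutate src tgt hbar_tgt hj hab (hsrc_ne hbc)) ih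
  · obtain ⟨c, hjc, _⟩ := TransGen.head'_iff.1 (heq ▸ hji : j ∈ ancestors src tgt _ i)
    exact hsrc_ne hjc rfl

end Mutation

theorem stmt_2_general {I H : Type} [Fintype I] [DecidableEq I] [DecidableEq H]
    (src tgt : H → I) (bar : H → H)
    (hbar_src : ∀ h, src (bar h) = tgt h) (hbar_tgt : ∀ h, tgt (bar h) = src h)
    (Ω : Finset H)
    (hacyclic : ¬ HasCycle src tgt Ω) (i : I) :
    ∃ l : List I, GoodSeq src tgt bar Ω l ∧
      IsSource tgt (l.foldl (fun Ω' j => mutate src tgt bar j Ω') Ω) i := by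
  induction hn : (ancestors src tgt Ω i).ncard using Nat.strong_induction_on generalizing Ω with
  | _ n ih =>
    by_cases hi : IsSource tgt Ω i
    · exact ⟨[], trivial, hi⟩
    obtain ⟨j, hji, hj⟩ := exists_isSource_mem_ancestors src tgt hacyclic hi
    have hlt : (ancestors src tgt (mutate src tgt bar j Ω) i).ncard < n :=
      hn ▸ Set.ncard_lt_ncard (ancestors_mutate_ssubset src tgt hbar_src hbar_tgt hj hji)
    obtain ⟨l, hl, hli⟩ :=
      ih _ hlt _ (not_hasCycle_mutate src tgt hbar_src hbar_tgt hj hacyclic) rfl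
    exact ⟨j :: l, ⟨hj, hl⟩, hli⟩

/-- For a finite quiver whose orientation has no oriented cycles and any vertex `i`,
there is a sequence of vertices, each a source at its turn, whose successive mutations
turn `i` into a source. -/
theorem stmt_2 {I H : Type} [Fintype I] [Fintype H] [DecidableEq I] [DecidableEq H]
    (src tgt : H → I) (bar : H → H)
    (hinv : Function.Involutive bar) (hfpf : ∀ h, bar h ≠ h)
    (hbar_src : ∀ h, src (bar h) = tgt h) (hbar_tgt : ∀ h, tgt (bar h) = src h)
    (Ω : Finset H) (hΩ : ∀ h, h ∈ Ω ↔ bar h ∉ Ω)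
    (hacyclic : ¬ HasCycle src tgt Ω) (i : I) :
    ∃ l : List I, GoodSeq src tgt bar Ω l ∧
      IsSource tgt (l.foldl (fun Ω' j => mutate src tgt bar j Ω') Ω) i :=
  stmt_2_general src tgt bar hbar_src hbar_tgt Ω hacyclic i
end

section
/- Let V be a finite-dimensional I-graded vector space, x = (x_h)_{h∈H} a collection of linear maps x_h : V_{h'} → V_{h''} indexed by a finite set H of arrows on vertex set I, and let y : V → W be an I-graded linear map to another graded space W. Suppose (x, y) is stable, meaning the only I-graded subspace V' ⊆ V with x_h(V'_{h'}) ⊆ V'_{h''} for all h and y(V') = 0 is the zero subspace. Then the stabilizer of (x, y) in G_V = ∏_i GL(V_i) is trivial: if g ∈ G_V satisfies g_{h''} x_h g_{h'}^{−1} = x_h for all h and y ∘ g = y, then g = id. Consequently G_V acts freely on the set of stable points. -/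
/-- If `(x, y)` is stable (the only `x`-stable graded subspace annihilated by `y`
is zero), then any `g ∈ G_V = ∏_i GL(V_i)` fixing `x` (i.e. `g_{h''} x_h g_{h'}⁻¹ = x_h`)
and satisfying `y ∘ g = y` is the identity; hence `G_V` acts freely on stable points. -/
theorem stmt_4 {I H : Type} (src tgt : H → I)
    (V W : I → Type)
    [∀ i, AddCommGroup (V i)] [∀ i, Module ℂ (V i)]
    [∀ i, AddCommGroup (W i)] [∀ i, Module ℂ (W i)]
    (x : ∀ h : H, V (src h) →ₗ[ℂ] V (tgt h))
    (y : ∀ i, V i →ₗ[ℂ] W i)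
    (hstable : ∀ V' : ∀ i, Submodule ℂ (V i),
      (∀ h : H, ∀ v ∈ V' (src h), x h v ∈ V' (tgt h)) →
      (∀ i, ∀ v ∈ V' i, y i v = 0) →
      ∀ i, V' i = ⊥)
    (g : ∀ i, V i ≃ₗ[ℂ] V i)
    (hgx : ∀ h : H, ∀ v : V (src h), x h (g (src h) v) = g (tgt h) (x h v))
    (hgy : ∀ i, ∀ v : V i, y i (g i v) = y i v) :
    ∀ i, ∀ v : V i, g i v = v := by
  set V' : ∀ i, Submodule ℂ (V i) :=
    fun i => LinearMap.range ((g i : V i →ₗ[ℂ] V i) - LinearMap.id) with hV'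
  have hx : ∀ h : H, ∀ v ∈ V' (src h), x h v ∈ V' (tgt h) := by
    intro h v hv
    obtain ⟨u, rfl⟩ := hv
    refine ⟨x h u, ?_⟩
    simp only [LinearMap.sub_apply, LinearMap.id_apply, LinearEquiv.coe_coe, map_sub]
    rw [hgx]
  have hy : ∀ i, ∀ v ∈ V' i, y i v = 0 := by
    intro i v hv
    obtain ⟨u, rfl⟩ := hv
    simp only [LinearMap.sub_apply, LinearMap.id_apply, LinearEquiv.coe_coe, map_sub]
    rw [hgy, sub_self]
  have hbot := hstable V' hx hy
  intro i v
  have : g i v - v ∈ V' i := ⟨v, rfl⟩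
  rw [hbot i] at this
  simpa [sub_eq_zero] using this
end

section
/- Let M be a ℚ-vector space with a basis {[Z]} indexed by a finite poset (P, ≺), and let f be a linear operator family f_i^{(t)} together with maps ε_i : P → ℕ and bijections ρ_{i,t} between {Z : ε_i(Z) = t} and corresponding index sets, satisfying: for each Z with ε_i(Z) = t > 0, f_i^{(t)}[ρ_{i,t}(Z)] = ±[Z] + Σ_{ε_i(Z'') > t} c_{Z''} [Z'']. Then for every t ≥ 0, the subspace f_i^t M equals span{[Z] : ε_i(Z) ≥ t}, where f_i = f_i^{(1)} and it is assumed f_i^{(t)} maps into span{[Z] : ε_i(Z) ≥ t} and f_i^s f_i^{(t)} ⊆ f_i^{s+t} M appropriately. -/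
open Finset

/-! Downward induction on `ε Z`, which is bounded because `P` is finite: in the triangularity
relation `fdiv (ε Z) w = ± b Z + Σ c • b Z'`, every `b Z'` with `ε Z' > ε Z` already lies in
`range (f ^ ε Z') ≤ range (f ^ ε Z)`, and so does `fdiv (ε Z) w`; hence so does `b Z`. Since the
ranges of the powers of `f` decrease, the span of the `b Z` with `ε Z ≥ t` lies in `range (f ^ t)`. -/

namespace Submodule

variable {R M P : Type*} [Ring R] [AddCommGroup M] [Module R M]
  {N : ℕ → Submodule R M} {v : P → M} {ε : P → ℕ}

theorem mem_of_antitone_of_triangular [Finite P] (hN : Antitone N) (hN0 : N 0 = ⊤)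
    (htri : ∀ Z, 0 < ε Z →
      ∃ s : R, IsUnit s ∧ s • v Z ∈ N (ε Z) ⊔ span R (v '' {Z' | ε Z < ε Z'})) (Z : P) :
    v Z ∈ N (ε Z) := by
  obtain ⟨bound, hbound⟩ := (Set.finite_range ε).bddAbove
  induction hk : bound - ε Z using Nat.strong_induction_on generalizing Z with
  | _ k ih =>
    rcases Nat.eq_zero_or_pos (ε Z) with h0 | hpos
    · simp [h0, hN0]
    obtain ⟨s, hs, hmem⟩ := htri Z hpos
    have hspan : span R (v '' {Z' | ε Z < ε Z'}) ≤ N (ε Z) := by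
      rw [span_le]
      rintro _ ⟨Z', hZ', rfl⟩
      have hlt : ε Z < ε Z' := hZ'
      have hZ'bound : ε Z' ≤ bound := hbound ⟨Z', rfl⟩
      exact hN hlt.le (ih _ (by omega) Z' rfl)
    rw [← smul_mem_iff_of_isUnit _ hs]
    exact sup_le le_rfl hspan hmem

theorem span_le_of_antitone (hN : Antitone N) (hv : ∀ Z, v Z ∈ N (ε Z)) (t : ℕ) :
    span R (v '' {Z | t ≤ ε Z}) ≤ N t := by
  rw [span_le]
  rintro _ ⟨Z, hZ, rfl⟩
  exact hN hZ (hv Z)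

end Submodule

theorem stmt_13_general {P : Type} [Fintype P] {M : Type} [AddCommGroup M] [Module ℚ M]
    (b : Module.Basis P ℚ M) (ε : P → ℕ)
    (f : Module.End ℚ M) (fdiv : ℕ → M →ₗ[ℚ] M)
    (hpow : ∀ (t : ℕ) (m : M), ∃ m', fdiv t m = (f ^ t) m')
    (hsub : ∀ t : ℕ, LinearMap.range (f ^ t) ≤ Submodule.span ℚ (b '' {Z | t ≤ ε Z}))
    (htri : ∀ Z : P, 0 < ε Z → ∃ (w : M) (s : ℚ), (s = 1 ∨ s = -1) ∧ ∃ c : P → ℚ,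
        fdiv (ε Z) w = s • b Z + ∑ Z' ∈ univ.filter (fun Z' => ε Z < ε Z'), c Z' • b Z') :
    ∀ t : ℕ, LinearMap.range (f ^ t) = Submodule.span ℚ (b '' {Z | t ≤ ε Z}) := by
  have hanti : Antitone fun t => LinearMap.range (f ^ t) := (LinearMap.iterateRange f).monotone
  have hb : ∀ Z, b Z ∈ LinearMap.range (f ^ ε Z) := by
    refine Submodule.mem_of_antitone_of_triangular hanti (by simp [Module.End.one_eq_id]) fun Z hZ => ?_
    obtain ⟨w, s, hs, c, hw⟩ := htri Z hZ
    refine ⟨s, by rcases hs with rfl | rfl <;> simp, ?_⟩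
    have hfdiv : fdiv (ε Z) w ∈ LinearMap.range (f ^ ε Z) := by
      obtain ⟨m, hm⟩ := hpow (ε Z) w
      exact ⟨m, hm.symm⟩
    have hsum : ∑ Z' ∈ univ.filter (fun Z' => ε Z < ε Z'), c Z' • b Z' ∈
        Submodule.span ℚ (b '' {Z' | ε Z < ε Z'}) :=
      Submodule.sum_mem _ fun Z' hZ' => Submodule.smul_mem _ _
        (Submodule.subset_span ⟨Z', (mem_filter.mp hZ').2, rfl⟩)
    rw [eq_sub_of_add_eq hw.symm]
    exact Submodule.sub_mem _ (Submodule.mem_sup_left hfdiv) (Submodule.mem_sup_right hsum)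
  exact fun t => le_antisymm (hsub t) (Submodule.span_le_of_antitone hanti hb t)

/-- Abstract form of `f_i^t H(𝔏(ω)) = span{[Z] : ε_i(Z) ≥ t}`.  `M` has a finite
basis `b` indexed by `P` (the irreducible components), `f` is the Hecke operator
`f_i`, and `fdiv t` is the divided power `f_i^{(t)}`.  Assuming: `fdiv 1 = f`;
each `fdiv t` lands in the range of `f^t`; `f^t` maps into the span of the basis
vectors with `ε ≥ t`; and the triangularity `fdiv (ε Z) w = ± b Z + Σ_{ε > ε Z} c • b`
for suitable `w` whenever `ε Z > 0`; one gets `range (f^t) = span{b Z : ε Z ≥ t}`. -/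
theorem stmt_13 {P : Type} [Fintype P] {M : Type} [AddCommGroup M] [Module ℚ M]
    (b : Module.Basis P ℚ M) (ε : P → ℕ)
    (f : Module.End ℚ M) (fdiv : ℕ → M →ₗ[ℚ] M)
    (hf1 : fdiv 1 = f)
    (hpow : ∀ (t : ℕ) (m : M), ∃ m', fdiv t m = (f ^ t) m')
    (hsub : ∀ t : ℕ, LinearMap.range (f ^ t) ≤ Submodule.span ℚ (b '' {Z | t ≤ ε Z}))
    (htri : ∀ Z : P, 0 < ε Z → ∃ (w : M) (s : ℚ), (s = 1 ∨ s = -1) ∧ ∃ c : P → ℚ,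
        fdiv (ε Z) w = s • b Z + ∑ Z' ∈ univ.filter (fun Z' => ε Z < ε Z'), c Z' • b Z') :
    ∀ t : ℕ, LinearMap.range (f ^ t) = Submodule.span ℚ (b '' {Z | t ≤ ε Z}) :=
  stmt_13_general b ε f fdiv hpow hsub htri
end
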